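/- arXiv:2504.00479 — 5 statements merged into one kernel-verified Lean document; each statement's English description precedes it below -/
import Mathlib

section
/- Fix ε ∈ (0, 1/8) and σ ≥ 1/2 + ε. Assume: (i) a₀ = 1/(2π²) and a₁, …, a₄ are real numbers with ∫₀^T |ζ(1/2 + it)|⁴ dt = T·Σ_{s=0}^{4} a_s (ln T)^{4−s} + O(T^{7/8+ε}) as T → ∞; (ii) g : ℝ → ℝ satisfies g(T) > T for all large T, the integrals ∫_T^{g(T)} |ζ(1/2 + it)|² dt and ∫_T^{g(T)} |ζ(σ + it)|² dt are positive for all large T, and (∫_T^{g(T)} |ζ(1/2 + it)|² dt)/(∫_T^{g(T)} |ζ(σ + it)|² dt) = (1/ζ(2σ))·ln T + O(1) as T → ∞. Put c₀ = 1 and c_s = 2π²·ζ(2σ)^{−s}·a_s for s = 1, 2, 3, 4. Then, as T → ∞, (∫_T^{g(T)} |ζ(σ + it)|² dt)⁴ · (∫₀^T |ζ(1/2 + it)|⁴ dt) · (Σ_{s=0}^{4} c_s · (∫_T^{g(T)} |ζ(1/2 + it)|² dt)^{4−s} · (∫_T^{g(T)} |ζ(σ + it)|² dt)^s)^{−1}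 = (ζ(2σ)⁴/(2π²))·T·(1 + O(1/ln T)). -/
/-! Only the leading coefficients matter. Dividing numerator and denominator by `Iσ⁴` turns the
expression into `F(T) / S(q)` with `q = I₂/Iσ` and `S(x) = ∑ c_s x^(4-s)`. Ingham's formula gives
`F(T) = a₀ T ln⁴T + O(T ln³T)`, and `q = ln T / ζ(2σ) + O(1)` gives
`S(q) = c₀ (ln T / ζ(2σ))⁴ + O(ln³T)`. Both relative errors are `O(1 / ln T)`, hence so is the
relative error of the quotient against `a₀ ζ(2σ)⁴ T / c₀`. -/

open Filter Real Complex Asymptotics Topology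

namespace Asymptotics

variable {α 𝕜 : Type*} [NormedField 𝕜] {l : Filter α}

theorem isBigO_pow_of_le {g : α → 𝕜} (h1 : (fun _ => (1 : 𝕜)) =O[l] g) {m n : ℕ}
    (hmn : m ≤ n) : (fun a => g a ^ m) =O[l] fun a => g a ^ n := by
  simpa [← pow_add, Nat.add_sub_cancel' hmn] using
    (isBigO_refl (fun a => g a ^ m) l).mul (h1.pow (n - m))

theorem isBigO_pow_sub_pow {x y g : α → 𝕜} (hxy : (fun a => x a - y a) =O[l] fun _ => (1 : 𝕜))
    (hx : x =O[l] g) (hy : y =O[l] g) (n : ℕ) :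
    (fun a => x a ^ (n + 1) - y a ^ (n + 1)) =O[l] fun a => g a ^ n := by
  have hsum : (fun a => ∑ i ∈ Finset.range (n + 1), x a ^ i * y a ^ (n - i)) =O[l]
      fun a => g a ^ n := by
    refine IsBigO.fun_sum fun i hi => ?_
    have hin : i ≤ n := Nat.lt_succ_iff.mp (Finset.mem_range.mp hi)
    simpa [← pow_add, Nat.add_sub_cancel' hin] using (hx.pow i).mul (hy.pow (n - i))
  simpa [← geom_sum₂_mul] using hsum.mul hxy

theorem sum_range_mul_pow_sub_isBigO {x g : α → 𝕜} (hx : x =O[l] g)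
    (h1 : (fun _ => (1 : 𝕜)) =O[l] g) (c : ℕ → 𝕜) (N : ℕ) :
    (fun a => ∑ s ∈ Finset.range (N + 1), c s * x a ^ (N - s) - c 0 * x a ^ N) =O[l]
      fun a => g a ^ (N - 1) := by
  simp only [Finset.sum_range_succ', Nat.sub_zero, add_sub_cancel_right]
  refine IsBigO.fun_sum fun s hs => ?_
  have hs : N - (s + 1) ≤ N - 1 := by omega
  exact ((hx.pow _).trans (isBigO_pow_of_le h1 hs)).const_mul_left (c (s + 1))

theorem div_const_mul_mul_sub_one_isBigO {f k x : α → 𝕜} {c : 𝕜} (hc : c ≠ 0)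
    (hk : ∀ᶠ a in l, k a ≠ 0) (hx : ∀ᶠ a in l, x a ≠ 0)
    (h : (fun a => f a - c * k a * x a) =O[l] k) :
    (fun a => f a / (c * k a * x a) - 1) =O[l] fun a => (x a)⁻¹ := by
  refine (h.mul (isBigO_refl (fun a => (c * k a * x a)⁻¹) l)).congr' ?_ ?_ |>.trans
    (isBigO_const_mul_self c⁻¹ _ l)
  · filter_upwards [hk, hx] with a hka hxa
    field_simp
  · filter_upwards [hk, hx] with a hka hxa
    field_simp

theorem div_div_div_sub_one_isBigO {f g A B h : α → 𝕜}
    (hf : (fun a => f a / A a - 1) =O[l] h) (hg : (fun a => g a / B a - 1) =O[l] h)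
    (hh : Tendsto h l (𝓝 0)) :
    (fun a => f a / g a / (A a / B a) - 1) =O[l] h := by
  have hg1 : Tendsto (fun a => g a / B a) l (𝓝 1) := by
    simpa using (hg.trans_tendsto hh).add_const 1
  have hinv : (fun a => (g a / B a)⁻¹) =O[l] fun _ => (1 : 𝕜) :=
    (hg1.inv₀ one_ne_zero).isBigO_one 𝕜
  refine ((hf.sub hg).mul hinv).congr' ?_ (by simp)
  filter_upwards [hg1.eventually_ne one_ne_zero] with a ha
  rw [div_div_div_comm, sub_sub_sub_cancel_right, sub_mul, mul_inv_cancel₀ ha,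
    ← div_eq_mul_inv]

end Asymptotics

theorem Finset.sum_range_mul_pow_mul_pow {K : Type*} [Field K] (c : ℕ → K) (N : ℕ) (x : K)
    {y : K} (hy : y ≠ 0) :
    ∑ s ∈ Finset.range (N + 1), c s * x ^ (N - s) * y ^ s
      = y ^ N * ∑ s ∈ Finset.range (N + 1), c s * (x / y) ^ (N - s) := by
  rw [Finset.mul_sum]
  refine Finset.sum_congr rfl fun s hs => ?_
  rw [← pow_sub_mul_pow y (Nat.lt_succ_iff.mp (Finset.mem_range.mp hs)), div_pow]
  field_simp

theorem isBigO_one_log_atTop : (fun _ => (1 : ℝ)) =O[atTop] Real.log :=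
  isLittleO_const_log_atTop.isBigO

theorem fourth_moment_sub_leading_isBigO {r : ℝ} (hr : r ≤ 1) (a : ℕ → ℝ) (F : ℝ → ℝ)
    (hF : (fun T : ℝ => F T - T * ∑ s ∈ Finset.range 5, a s * Real.log T ^ (4 - s))
      =O[atTop] fun T : ℝ => T ^ r) :
    (fun T => F T - a 0 * (T * Real.log T ^ 3) * Real.log T) =O[atTop]
      fun T => T * Real.log T ^ 3 := by
  have hpoly : (fun T => T * ∑ s ∈ Finset.range 5, a s * Real.log T ^ (4 - s)
      - T * (a 0 * Real.log T ^ 4)) =O[atTop] fun T => T * Real.log T ^ 3 := by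
    simpa only [mul_sub] using (isBigO_refl (fun T : ℝ => T) atTop).mul
      (sum_range_mul_pow_sub_isBigO (isBigO_refl Real.log atTop) isBigO_one_log_atTop a 4)
  have hrpow : (fun T : ℝ => T ^ r) =O[atTop] fun T => T := by
    refine IsBigO.of_bound' ?_
    filter_upwards [eventually_ge_atTop 1] with T hT
    rw [norm_of_nonneg (by positivity), norm_of_nonneg (by positivity)]
    simpa using Real.rpow_le_rpow_of_exponent_le hT hr
  have hT : (fun T : ℝ => T) =O[atTop] fun T => T * Real.log T ^ 3 := by
    simpa using (isBigO_refl (fun T : ℝ => T) atTop).mul (isBigO_one_log_atTop.pow 3)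
  refine ((hF.trans (hrpow.trans hT)).add hpoly).congr_left fun T => ?_
  ring

theorem sum_range_mul_pow_sub_log_pow_isBigO {z : ℝ} (q : ℝ → ℝ)
    (hq : (fun T => q T - Real.log T / z) =O[atTop] fun _ => (1 : ℝ)) (c : ℕ → ℝ) :
    (fun T => ∑ s ∈ Finset.range 5, c s * q T ^ (4 - s)
      - c 0 / z ^ 4 * Real.log T ^ 3 * Real.log T) =O[atTop] fun T => Real.log T ^ 3 := by
  have hlog : (fun T => Real.log T / z) =O[atTop] Real.log := by
    simpa only [div_eq_inv_mul] using (isBigO_refl Real.log atTop).const_mul_left z⁻¹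
  have hqlog : q =O[atTop] Real.log :=
    ((hq.trans isBigO_one_log_atTop).add hlog).congr_left fun T => sub_add_cancel _ _
  refine ((sum_range_mul_pow_sub_isBigO hqlog isBigO_one_log_atTop c 4).add
    ((isBigO_pow_sub_pow hq hqlog hlog 3).const_mul_left (c 0))).congr_left fun T => ?_
  ring

theorem composed_expression_asymptotics_general
    (ε σ : ℝ) (hε : 0 < ε) (hε' : ε < 1 / 8) (hσ : 1 / 2 + ε ≤ σ)
    (a : ℕ → ℝ) (ha0 : a 0 = 1 / (2 * Real.pi ^ 2))
    (F I₂ Iσ : ℝ → ℝ)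
    (hIngham : (fun T : ℝ => F T -
        T * ∑ s ∈ Finset.range 5, a s * Real.log T ^ (4 - s))
      =O[atTop] fun T : ℝ => T ^ ((7:ℝ) / 8 + ε))
    (hIσpos : ∀ᶠ T : ℝ in atTop, 0 < Iσ T)
    (hquot : (fun T : ℝ =>
        I₂ T / Iσ T - Real.log T / (riemannZeta (2 * σ)).re)
      =O[atTop] fun _ : ℝ => (1:ℝ))
    (c : ℕ → ℝ) (hc0 : c 0 = 1) :
    ∃ D : ℝ → ℝ,
      (D =O[atTop] fun T : ℝ => 1 / Real.log T) ∧
      ∀ᶠ T : ℝ in atTop,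
        Iσ T ^ 4 * F T *
            (∑ s ∈ Finset.range 5, c s * I₂ T ^ (4 - s) * Iσ T ^ s)⁻¹ =
          ((riemannZeta (2 * σ)).re ^ 4 / (2 * Real.pi ^ 2)) * T * (1 + D T) := by
  set z := (riemannZeta (2 * σ)).re
  have hz : 0 < z := by
    simpa using riemannZeta_re_pos_of_one_lt (by linarith : 1 < 2 * σ)
  have hT : ∀ᶠ T : ℝ in atTop, T ≠ 0 := eventually_ne_atTop 0
  have hlog : ∀ᶠ T : ℝ in atTop, Real.log T ≠ 0 := tendsto_log_atTop.eventually_ne_atTop 0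
  have hF := div_const_mul_mul_sub_one_isBigO (by rw [ha0]; positivity)
    (by filter_upwards [hT, hlog] with T hT hL; positivity)
    hlog (fourth_moment_sub_leading_isBigO (by linarith) a F hIngham)
  have hS := div_const_mul_mul_sub_one_isBigO (by rw [hc0]; positivity)
    (by filter_upwards [hlog] with T hL; positivity)
    hlog (sum_range_mul_pow_sub_log_pow_isBigO _ hquot c)
  have hrel := div_div_div_sub_one_isBigO hF hS
    (tendsto_inv_atTop_zero.comp tendsto_log_atTop)
  refine ⟨fun T => Iσ T ^ 4 * F T *
      (∑ s ∈ Finset.range 5, c s * I₂ T ^ (4 - s) * Iσ T ^ s)⁻¹ /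
        (z ^ 4 / (2 * Real.pi ^ 2) * T) - 1, hrel.congr' ?_ (by simp [one_div]), ?_⟩
  · filter_upwards [hT, hlog, hIσpos] with T hT hlog hIσ
    have hsum : ∑ s ∈ Finset.range 5, c s * I₂ T ^ (4 - s) * Iσ T ^ s
        = Iσ T ^ 4 * ∑ s ∈ Finset.range 5, c s * (I₂ T / Iσ T) ^ (4 - s) :=
      Finset.sum_range_mul_pow_mul_pow c 4 _ hIσ.ne'
    rw [hsum, ha0, hc0]
    field_simp
  · filter_upwards [hT] with T hT
    field_simp
    ring

/-- Lemma 2 of the paper: the composed expression of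
zeta-integrals equals `(ζ(2σ)⁴/(2π²))·T·(1 + O(1/ln T))`. -/
theorem composed_expression_asymptotics
    (ε σ : ℝ) (hε : 0 < ε) (hε' : ε < 1 / 8) (hσ : 1 / 2 + ε ≤ σ)
    (a : ℕ → ℝ) (ha0 : a 0 = 1 / (2 * Real.pi ^ 2))
    (F I₂ Iσ : ℝ → ℝ) (g : ℝ → ℝ)
    (hF : ∀ T : ℝ, F T = ∫ t in (0:ℝ)..T,
      ‖riemannZeta (1 / 2 + t * Complex.I)‖ ^ 4)
    (hI₂ : ∀ T : ℝ, I₂ T = ∫ t in T..(g T),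
      ‖riemannZeta (1 / 2 + t * Complex.I)‖ ^ 2)
    (hIσ : ∀ T : ℝ, Iσ T = ∫ t in T..(g T),
      ‖riemannZeta (σ + t * Complex.I)‖ ^ 2)
    (hIngham : (fun T : ℝ => F T -
        T * ∑ s ∈ Finset.range 5, a s * Real.log T ^ (4 - s))
      =O[atTop] fun T : ℝ => T ^ ((7:ℝ) / 8 + ε))
    (hg : ∀ᶠ T : ℝ in atTop, T < g T)
    (hI₂pos : ∀ᶠ T : ℝ in atTop, 0 < I₂ T)
    (hIσpos : ∀ᶠ T : ℝ in atTop, 0 < Iσ T)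
    (hquot : (fun T : ℝ =>
        I₂ T / Iσ T - Real.log T / (riemannZeta (2 * σ)).re)
      =O[atTop] fun _ : ℝ => (1:ℝ))
    (c : ℕ → ℝ) (hc0 : c 0 = 1)
    (hc : ∀ s : ℕ, 1 ≤ s → s ≤ 4 →
      c s = 2 * Real.pi ^ 2 * ((riemannZeta (2 * σ)).re) ^ (-(s:ℤ)) * a s) :
    ∃ D : ℝ → ℝ,
      (D =O[atTop] fun T : ℝ => 1 / Real.log T) ∧
      ∀ᶠ T : ℝ in atTop,
        Iσ T ^ 4 * F T *
            (∑ s ∈ Finset.range 5, c s * I₂ T ^ (4 - s) * Iσ T ^ s)⁻¹ =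
          ((riemannZeta (2 * σ)).re ^ 4 / (2 * Real.pi ^ 2)) * T * (1 + D T) :=
  composed_expression_asymptotics_general ε σ hε hε' hσ a ha0 F I₂ Iσ hIngham hIσpos hquot c hc0
end

section
/- Fix ε ∈ (0, 1/8) and σ ≥ 1/2 + ε. Assume: (i) a₀ = 1/(2π²) and a₁, …, a₄ are real numbers with ∫₀^T |ζ(1/2 + it)|⁴ dt = T·Σ_{s=0}^{4} a_s (ln T)^{4−s} + O(T^{7/8+ε}) as T → ∞; (ii) g : ℝ → ℝ satisfies g(T) > T for all large T, the integrals ∫_T^{g(T)} |ζ(1/2 + it)|² dt and ∫_T^{g(T)} |ζ(σ + it)|² dt are positive for all large T, and (∫_T^{g(T)} |ζ(1/2 + it)|² dt)/(∫_T^{g(T)} |ζ(σ + it)|² dt) = (1/ζ(2σ))·ln T + O(1) as T → ∞. Put c₀ = 1, c_s = 2π²·ζ(2σ)^{−s}·a_s for s = 1, 2, 3, 4, and for x > 0 and τ > 0 set u = u(τ, x) = (2π²/ζ(2σ)⁴)·x·τ and E(τ, x) = (∫_u^{g(u)} |ζ(σ + it)|² dt)⁴ · (∫₀^u |ζ(1/2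 + it)|⁴ dt) · (Σ_{s=0}^{4} c_s · (∫_u^{g(u)} |ζ(1/2 + it)|² dt)^{4−s} · (∫_u^{g(u)} |ζ(σ + it)|² dt)^s)^{−1}. Then for every fixed x > 0, lim_{τ→∞} (1/τ)·E(τ, x) = x. -/
open Filter Real Asymptotics Topology Finset

/-! The quotient formula gives `I₂ / Iσ ~ log T / ζ(2σ)`. Writing the denominator as
`Iσ⁴ · Σ c_s (I₂ / Iσ)^(4-s)`, a polynomial in `I₂ / Iσ → ∞` with leading coefficient `c₀ = 1`,
it is `~ Iσ⁴ (log T / ζ(2σ))⁴`, while the Ingham–Heath-Brown formula gives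
`F(T) ~ a₀ T log⁴ T`. So `Iσ⁴ F / (denominator) ~ a₀ ζ(2σ)⁴ T`, and at `T = u(τ, x)` this is
`a₀ · 2π² x τ = x τ`. -/

theorem sum_mul_pow_sub_mul_pow_eq {K : Type*} [Semifield K] (c : ℕ → K) (n : ℕ) {x y : K}
    (hy : y ≠ 0) :
    ∑ s ∈ range (n + 1), c s * x ^ (n - s) * y ^ s =
      y ^ n * ∑ s ∈ range (n + 1), c s * (x / y) ^ (n - s) := by
  rw [mul_sum]
  refine sum_congr rfl fun s hs => ?_
  rw [div_pow, ← pow_sub_mul_pow y (Nat.le_of_lt_succ (mem_range.1 hs))]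
  field_simp

theorem isEquivalent_sum_mul_pow_sub {α : Type*} {l : Filter α} {y : α → ℝ}
    (hy : Tendsto y l atTop) (b : ℕ → ℝ) (hb : b 0 ≠ 0) (n : ℕ) :
    (fun t => ∑ s ∈ range (n + 1), b s * y t ^ (n - s)) ~[l] fun t => b 0 * y t ^ n := by
  refine isEquivalent_of_tendsto_one ?_
  have hlim : Tendsto (fun t => ∑ s ∈ range (n + 1), b s / b 0 * (y t)⁻¹ ^ s) l
      (𝓝 (∑ s ∈ range (n + 1), b s / b 0 * 0 ^ s)) :=
    tendsto_finsetSum _ fun s _ =>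
      tendsto_const_nhds.mul ((tendsto_inv_atTop_zero.comp hy).pow s)
  rw [sum_range_succ', sum_eq_zero fun s _ => by simp, zero_add, pow_zero, mul_one,
    div_self hb] at hlim
  refine hlim.congr' ?_
  filter_upwards [hy.eventually_gt_atTop 0] with t ht
  rw [Pi.div_apply, sum_div]
  refine sum_congr rfl fun s hs => ?_
  rw [pow_sub₀ _ ht.ne' (Nat.le_of_lt_succ (mem_range.1 hs)), inv_pow]
  field_simp

theorem isLittleO_rpow_mul_log_pow {θ : ℝ} (hθ : θ < 1) (n : ℕ) :
    (fun T : ℝ => T ^ θ) =o[atTop] fun T => T * log T ^ n := by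
  have hsmall : (fun T : ℝ => T ^ (θ - 1)) =o[atTop] fun T => log T ^ n := by
    refine (isLittleO_one_iff ℝ |>.2 ?_).trans_isBigO ?_
    · simpa using tendsto_rpow_neg_atTop (y := 1 - θ) (by linarith)
    · refine IsBigO.of_bound 1 ?_
      filter_upwards [tendsto_log_atTop.eventually_ge_atTop 1] with T hT
      simpa [norm_pow] using one_le_pow₀ (hT.trans (le_abs_self _))
  refine (hsmall.mul_isBigO (isBigO_refl (fun T : ℝ => T) atTop)).congr' ?_ ?_
  · filter_upwards [eventually_gt_atTop 0] with T hT
    rw [rpow_sub_one hT.ne', div_mul_cancel₀ _ hT.ne']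
  · exact Eventually.of_forall fun T => mul_comm _ _

theorem isEquivalent_mul_log_pow_of_isBigO_rpow {F : ℝ → ℝ} {a : ℕ → ℝ} {n : ℕ} {θ : ℝ}
    (ha : a 0 ≠ 0) (hθ : θ < 1)
    (hF : (fun T => F T - T * ∑ s ∈ range (n + 1), a s * log T ^ (n - s)) =O[atTop]
      fun T => T ^ θ) :
    F ~[atTop] fun T => a 0 * T * log T ^ n := by
  have hmain : (fun T => T * ∑ s ∈ range (n + 1), a s * log T ^ (n - s)) ~[atTop]
      fun T => a 0 * T * log T ^ n := by
    refine (IsEquivalent.refl (u := fun T : ℝ => T)).mul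
      (isEquivalent_sum_mul_pow_sub tendsto_log_atTop a ha n) |>.congr_right ?_
    exact Eventually.of_forall fun T => (mul_left_comm _ _ _).trans (mul_assoc _ _ _).symm
  have herr : (fun T => T ^ θ) =o[atTop] fun T => a 0 * T * log T ^ n := by
    simpa only [mul_assoc] using (isLittleO_rpow_mul_log_pow hθ n).const_mul_right ha
  refine (hmain.add_isLittleO (hF.trans_isLittleO herr)).congr_left ?_
  exact Eventually.of_forall fun T => add_sub_cancel _ _

theorem isEquivalent_pow_mul_mul_inv_sum {F I₂ Iσ L : ℝ → ℝ} {c : ℕ → ℝ} {n : ℕ} {A Z : ℝ}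
    (hc0 : c 0 = 1) (hZ : 0 < Z) (hL : Tendsto L atTop atTop)
    (hF : F ~[atTop] fun T => A * T * L T ^ n)
    (hq : (fun T => I₂ T / Iσ T) ~[atTop] fun T => L T / Z) (hIσ : ∀ᶠ T in atTop, Iσ T ≠ 0) :
    (fun T => Iσ T ^ n * F T * (∑ s ∈ range (n + 1), c s * I₂ T ^ (n - s) * Iσ T ^ s)⁻¹)
      ~[atTop] fun T => A * Z ^ n * T := by
  have hLZ : Tendsto (fun T => L T / Z) atTop atTop := hL.atTop_div_const hZ
  have hD : (fun T => ∑ s ∈ range (n + 1), c s * (I₂ T / Iσ T) ^ (n - s)) ~[atTop]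
      fun T => (L T / Z) ^ n := by
    have := isEquivalent_sum_mul_pow_sub (hq.symm.tendsto_atTop hLZ) c (by simp [hc0]) n
    simp only [hc0, one_mul] at this
    exact this.trans (hq.pow n)
  refine ((hF.div hD).congr_left ?_).congr_right ?_
  · filter_upwards [hIσ] with T hT
    rw [Pi.div_apply, sum_mul_pow_sub_mul_pow_eq c n hT]
    field_simp
  · filter_upwards [hL.eventually_gt_atTop 0] with T hT
    rw [Pi.div_apply, div_pow]
    field_simp

theorem cross_breed_zeta_functional_general
    (ε σ : ℝ) (hε : 0 < ε) (hε' : ε < 1 / 8) (hσ : 1 / 2 + ε ≤ σ)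
    (a : ℕ → ℝ) (ha0 : a 0 = 1 / (2 * Real.pi ^ 2))
    (F I₂ Iσ : ℝ → ℝ)
    (hIngham : (fun T : ℝ => F T -
        T * ∑ s ∈ Finset.range 5, a s * Real.log T ^ (4 - s))
      =O[atTop] fun T : ℝ => T ^ ((7:ℝ) / 8 + ε))
    (hIσpos : ∀ᶠ T : ℝ in atTop, 0 < Iσ T)
    (hquot : (fun T : ℝ =>
        I₂ T / Iσ T - Real.log T / (riemannZeta (2 * σ)).re)
      =O[atTop] fun _ : ℝ => (1:ℝ))
    (c : ℕ → ℝ) (hc0 : c 0 = 1)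
    (u : ℝ → ℝ → ℝ)
    (hu : ∀ τ x : ℝ, u τ x =
      2 * Real.pi ^ 2 / (riemannZeta (2 * σ)).re ^ 4 * x * τ)
    (E : ℝ → ℝ → ℝ)
    (hE : ∀ τ x : ℝ, E τ x =
      Iσ (u τ x) ^ 4 * F (u τ x) *
        (∑ s ∈ Finset.range 5,
          c s * I₂ (u τ x) ^ (4 - s) * Iσ (u τ x) ^ s)⁻¹) :
    ∀ x : ℝ, 0 < x →
      Tendsto (fun τ : ℝ => E τ x / τ) atTop (nhds x) := by
  intro x hx
  set Z := (riemannZeta (2 * σ)).re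
  have hZ : 0 < Z := by
    simpa using riemannZeta_re_pos_of_one_lt (x := 2 * σ) (by linarith)
  have hq : (fun T => I₂ T / Iσ T) ~[atTop] fun T => log T / Z :=
    hquot.trans_isLittleO <| (isLittleO_one_left_iff ℝ).2 <|
      tendsto_norm_atTop_atTop.comp (tendsto_log_atTop.atTop_div_const hZ)
  have hF : F ~[atTop] fun T => a 0 * T * log T ^ 4 :=
    isEquivalent_mul_log_pow_of_isBigO_rpow (by rw [ha0]; positivity) (by linarith) hIngham
  have hG := isEquivalent_pow_mul_mul_inv_sum hc0 hZ tendsto_log_atTop hF hq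
    (hIσpos.mono fun _ h => h.ne')
  have hu_top : Tendsto (fun τ => u τ x) atTop atTop :=
    (tendsto_id.const_mul_atTop (by positivity)).congr fun τ => (hu τ x).symm
  have hEx : (fun τ => E τ x) ~[atTop] fun τ => x * τ := by
    refine ((hG.comp_tendsto hu_top).congr_left ?_).congr_right ?_
    · exact Eventually.of_forall fun τ => (hE τ x).symm
    · refine Eventually.of_forall fun τ => ?_
      simp only [Function.comp_apply, hu, ha0]
      field_simp
  refine (hEx.div (IsEquivalent.refl (u := fun τ : ℝ => τ))).symm.tendsto_nhds ?_
  refine tendsto_const_nhds.congr' ?_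
  filter_upwards [eventually_ne_atTop 0] with τ hτ
  simp [hτ]

/-- Theorem 1 of the paper: the new ζ-functional, a cross-breed
of the Ingham--Heath-Brown and Moser quotient formulas. -/
theorem cross_breed_zeta_functional
    (ε σ : ℝ) (hε : 0 < ε) (hε' : ε < 1 / 8) (hσ : 1 / 2 + ε ≤ σ)
    (a : ℕ → ℝ) (ha0 : a 0 = 1 / (2 * Real.pi ^ 2))
    (F I₂ Iσ : ℝ → ℝ) (g : ℝ → ℝ)
    (hF : ∀ T : ℝ, F T = ∫ t in (0:ℝ)..T,
      ‖riemannZeta (1 / 2 + t * Complex.I)‖ ^ 4)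
    (hI₂ : ∀ T : ℝ, I₂ T = ∫ t in T..(g T),
      ‖riemannZeta (1 / 2 + t * Complex.I)‖ ^ 2)
    (hIσ : ∀ T : ℝ, Iσ T = ∫ t in T..(g T),
      ‖riemannZeta (σ + t * Complex.I)‖ ^ 2)
    (hIngham : (fun T : ℝ => F T -
        T * ∑ s ∈ Finset.range 5, a s * Real.log T ^ (4 - s))
      =O[atTop] fun T : ℝ => T ^ ((7:ℝ) / 8 + ε))
    (hg : ∀ᶠ T : ℝ in atTop, T < g T)
    (hI₂pos : ∀ᶠ T : ℝ in atTop, 0 < I₂ T)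
    (hIσpos : ∀ᶠ T : ℝ in atTop, 0 < Iσ T)
    (hquot : (fun T : ℝ =>
        I₂ T / Iσ T - Real.log T / (riemannZeta (2 * σ)).re)
      =O[atTop] fun _ : ℝ => (1:ℝ))
    (c : ℕ → ℝ) (hc0 : c 0 = 1)
    (hc : ∀ s : ℕ, 1 ≤ s → s ≤ 4 →
      c s = 2 * Real.pi ^ 2 * ((riemannZeta (2 * σ)).re) ^ (-(s:ℤ)) * a s)
    (u : ℝ → ℝ → ℝ)
    (hu : ∀ τ x : ℝ, u τ x =
      2 * Real.pi ^ 2 / (riemannZeta (2 * σ)).re ^ 4 * x * τ)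
    (E : ℝ → ℝ → ℝ)
    (hE : ∀ τ x : ℝ, E τ x =
      Iσ (u τ x) ^ 4 * F (u τ x) *
        (∑ s ∈ Finset.range 5,
          c s * I₂ (u τ x) ^ (4 - s) * Iσ (u τ x) ^ s)⁻¹) :
    ∀ x : ℝ, 0 < x →
      Tendsto (fun τ : ℝ => E τ x / τ) atTop (nhds x) :=
  cross_breed_zeta_functional_general ε σ hε hε' hσ a ha0 F I₂ Iσ hIngham hIσpos hquot c hc0 u hu E
    hE
end

section
/- Fix ε ∈ (0, 1/8) and σ ≥ 1/2 + ε. Assume: (i) a₀ = 1/(2π²) and a₁, …, a₄ are real numbers with ∫₀^T |ζ(1/2 + it)|⁴ dt = T·Σ_{s=0}^{4} a_s (ln T)^{4−s} + O(T^{7/8+ε}) as T → ∞; (ii) g : ℝ → ℝ satisfies g(T) > T for all large T, the integrals ∫_T^{g(T)} |ζ(1/2 + it)|² dt and ∫_T^{g(T)} |ζ(σ + it)|² dt are positive for all large T, and (∫_T^{g(T)} |ζ(1/2 + it)|² dt)/(∫_T^{g(T)} |ζ(σ + it)|² dt) = (1/ζ(2σ))·ln T + O(1) as T → ∞. Put c₀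 = 1, c_s = 2π²·ζ(2σ)^{−s}·a_s for s = 1, 2, 3, 4, and for x > 0, τ > 0 set u = (2π²/ζ(2σ)⁴)·x·τ and E(τ, x) = (∫_u^{g(u)} |ζ(σ + it)|² dt)⁴ · (∫₀^u |ζ(1/2 + it)|⁴ dt) · (Σ_{s=0}^{4} c_s · (∫_u^{g(u)} |ζ(1/2 + it)|² dt)^{4−s} · (∫_u^{g(u)} |ζ(σ + it)|² dt)^s)^{−1}. Then for all positive integers x, y, z, n with n ≥ 3, the function τ ↦ (1/τ)·E(τ, (xⁿ + yⁿ)/zⁿ) converges as τ → ∞, and its limit equals 1 if and only if xⁿ + yⁿ = zⁿ. Consequently, the Fermat–Wiles theorem (for all positive integers x, y, z and n ≥ 3, xⁿ + yⁿ ≠ zⁿ) holds if and only if for all such x, y, z, n one has lim_{τ→∞} (1/τ)·E(τ, (xⁿ + yⁿ)/zⁿ) ≠ 1. -/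
/-! The fourth-moment formula gives `F T ~ a₀ T log⁴ T`, and the quotient formula gives
`I₂ T / Iσ T ~ log T / ζ(2σ)`. Dividing the numerator and denominator of `E` by `Iσ⁴` turns the
denominator into a quartic in `I₂ / Iσ` with leading coefficient `c₀ = 1`, hence
`~ (log u / ζ(2σ))⁴`. So `E τ q ~ a₀ ζ(2σ)⁴ u = q τ` by the choice of `u`, i.e. `E τ q / τ → q`;
for a Fermat rational `q = (xⁿ + yⁿ) / zⁿ` this limit is `1` exactly when `xⁿ + yⁿ = zⁿ`. -/

open Filter Real Complex Asymptotics Topology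

theorem isEquivalent_sum_mul_pow_sub_leading {α : Type*} {l : Filter α} (b : ℕ → ℝ)
    (hb : b 0 ≠ 0) (d : ℕ) {ρ : α → ℝ} (hρ : Tendsto ρ l atTop) :
    (fun x => ∑ s ∈ Finset.range (d + 1), b s * ρ x ^ (d - s)) ~[l] fun x => b 0 * ρ x ^ d := by
  have hlower : ∀ s ∈ Finset.range d,
      (fun x => b (s + 1) * ρ x ^ (d - (s + 1))) =o[l] fun x => b 0 * ρ x ^ d := fun s hs =>
    (((isLittleO_pow_pow_atTop_of_lt (𝕜 := ℝ) (Nat.sub_lt_self s.succ_pos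
      (Finset.mem_range.mp hs))).comp_tendsto hρ).const_mul_left _).const_mul_right hb
  simp only [Finset.sum_range_succ', Nat.sub_zero]
  exact (IsLittleO.fun_sum hlower).add_isEquivalent IsEquivalent.refl

theorem sum_mul_pow_mul_pow_eq_pow_mul_sum (b : ℕ → ℝ) (d : ℕ) (x : ℝ) {y : ℝ} (hy : y ≠ 0) :
    ∑ s ∈ Finset.range (d + 1), b s * x ^ (d - s) * y ^ s =
      y ^ d * ∑ s ∈ Finset.range (d + 1), b s * (x / y) ^ (d - s) := by
  rw [Finset.mul_sum]
  refine Finset.sum_congr rfl fun s hs => ?_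
  rw [← Nat.sub_add_cancel (Nat.lt_succ_iff.mp (Finset.mem_range.mp hs)), pow_add,
    Nat.add_sub_cancel, div_pow]
  field_simp

theorem Asymptotics.IsBigO.isEquivalent_of_tendsto_norm {α β : Type*} [NormedField β]
    {l : Filter α} {u v : α → β} (h : (fun x => u x - v x) =O[l] fun _ => (1 : β))
    (hv : Tendsto (fun x => ‖v x‖) l atTop) : u ~[l] v :=
  (h.trans_isLittleO (isLittleO_one_left_iff β |>.mpr hv)).isEquivalent

theorem isEquivalent_of_sub_isBigO_rpow {F S : ℝ → ℝ} {θ : ℝ} (hθ : θ ≤ 1)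
    (hF : (fun T => F T - T * S T) =O[atTop] fun T => T ^ θ) (hS : Tendsto S atTop atTop) :
    F ~[atTop] fun T => T * S T := by
  have hθ_le : (fun T : ℝ => T ^ θ) =O[atTop] fun T => T * 1 :=
    IsBigO.of_bound' <| (eventually_ge_atTop 1).mono fun T hT => by
      rw [mul_one, norm_of_nonneg (by positivity), norm_of_nonneg (by positivity)]
      exact rpow_le_self_of_one_le hT hθ
  have hS_large : (fun T : ℝ => T * 1) =o[atTop] fun T => T * S T :=
    (isBigO_refl _ _).mul_isLittleO
      ((isLittleO_one_left_iff ℝ).mpr (tendsto_norm_atTop_atTop.comp hS))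
  exact (hF.trans hθ_le |>.trans_isLittleO hS_large).isEquivalent

theorem isEquivalent_div_sum_mul_pow_of_isBigO {F ρ : ℝ → ℝ} {a c : ℕ → ℝ} {Z θ : ℝ}
    (hZ : 0 < Z) (hθ : θ ≤ 1) (ha0 : 0 < a 0) (hc0 : c 0 ≠ 0)
    (hF : (fun T => F T - T * ∑ s ∈ Finset.range 5, a s * Real.log T ^ (4 - s))
      =O[atTop] fun T => T ^ θ)
    (hρ : (fun T => ρ T - Real.log T / Z) =O[atTop] fun _ => (1 : ℝ)) :
    (fun T => F T / ∑ s ∈ Finset.range 5, c s * ρ T ^ (4 - s))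
      ~[atTop] fun T => a 0 * Z ^ 4 / c 0 * T := by
  have hlogZ : Tendsto (fun T => Real.log T / Z) atTop atTop :=
    tendsto_log_atTop.atTop_div_const hZ
  have hS := isEquivalent_sum_mul_pow_sub_leading a ha0.ne' 4 tendsto_log_atTop
  have hS_top : Tendsto (fun T => ∑ s ∈ Finset.range 5, a s * Real.log T ^ (4 - s)) atTop atTop :=
    hS.symm.tendsto_atTop <|
      ((tendsto_pow_atTop four_ne_zero).comp tendsto_log_atTop).const_mul_atTop ha0
  have hρZ : ρ ~[atTop] fun T => Real.log T / Z :=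
    hρ.isEquivalent_of_tendsto_norm (tendsto_norm_atTop_atTop.comp hlogZ)
  have hP := (isEquivalent_sum_mul_pow_sub_leading c hc0 4 (hρZ.symm.tendsto_atTop hlogZ)).trans
    (IsEquivalent.refl.mul (hρZ.pow 4))
  refine ((isEquivalent_of_sub_isBigO_rpow hθ hF hS_top).trans
    (IsEquivalent.refl.mul hS)).div hP |>.congr_right ?_
  filter_upwards [tendsto_log_atTop.eventually_ne_atTop 0] with T hT
  simp only [Pi.div_apply, Pi.mul_apply, Pi.pow_apply]
  field_simp

theorem fermat_rational_eq_one_iff {x y z n : ℕ} (hz : 0 < z) :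
    ((x : ℝ) ^ n + (y : ℝ) ^ n) / (z : ℝ) ^ n = 1 ↔ x ^ n + y ^ n = z ^ n := by
  rw [div_eq_one_iff_eq (by positivity)]
  exact_mod_cast Iff.rfl

theorem fermat_iff_of_tendsto_self (G : ℝ → ℝ → ℝ)
    (hG : ∀ q : ℝ, 0 < q → Tendsto (fun τ => G τ q) atTop (𝓝 q)) :
    (∀ x y z n : ℕ, 0 < x → 0 < y → 0 < z → 3 ≤ n →
      ∃ L : ℝ, Tendsto (fun τ => G τ (((x : ℝ) ^ n + (y : ℝ) ^ n) / (z : ℝ) ^ n)) atTop (𝓝 L) ∧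
        (L = 1 ↔ x ^ n + y ^ n = z ^ n)) ∧
    ((∀ x y z n : ℕ, 0 < x → 0 < y → 0 < z → 3 ≤ n → x ^ n + y ^ n ≠ z ^ n) ↔
      (∀ x y z n : ℕ, 0 < x → 0 < y → 0 < z → 3 ≤ n →
        ¬ Tendsto (fun τ => G τ (((x : ℝ) ^ n + (y : ℝ) ^ n) / (z : ℝ) ^ n)) atTop (𝓝 1))) := by
  have hlim : ∀ x y z n : ℕ, 0 < x → 0 < z →
      Tendsto (fun τ => G τ (((x : ℝ) ^ n + (y : ℝ) ^ n) / (z : ℝ) ^ n)) atTop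
        (𝓝 (((x : ℝ) ^ n + (y : ℝ) ^ n) / (z : ℝ) ^ n)) := fun x y z n hx hz =>
    hG _ (by positivity)
  refine ⟨fun x y z n hx _ hz _ => ⟨_, hlim x y z n hx hz, fermat_rational_eq_one_iff hz⟩,
    forall₄_congr fun x y z n => ?_⟩
  refine imp_congr_right fun hx => forall_congr' fun _ => imp_congr_right fun hz => ?_
  refine imp_congr_right fun _ => not_congr ?_
  rw [← fermat_rational_eq_one_iff hz]
  exact ⟨fun h => by rw [← h]; exact hlim x y z n hx hz, tendsto_nhds_unique (hlim x y z n hx hz)⟩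

theorem zeta_equivalent_of_fermat_wiles_general
    (ε σ : ℝ) (hε : 0 < ε) (hε' : ε < 1 / 8) (hσ : 1 / 2 + ε ≤ σ)
    (a : ℕ → ℝ) (ha0 : a 0 = 1 / (2 * Real.pi ^ 2))
    (F I₂ Iσ : ℝ → ℝ)
    (hIngham : (fun T : ℝ => F T -
        T * ∑ s ∈ Finset.range 5, a s * Real.log T ^ (4 - s))
      =O[atTop] fun T : ℝ => T ^ ((7:ℝ) / 8 + ε))
    (hIσpos : ∀ᶠ T : ℝ in atTop, 0 < Iσ T)
    (hquot : (fun T : ℝ =>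
        I₂ T / Iσ T - Real.log T / (riemannZeta (2 * σ)).re)
      =O[atTop] fun _ : ℝ => (1:ℝ))
    (c : ℕ → ℝ) (hc0 : c 0 = 1)
    (u : ℝ → ℝ → ℝ)
    (hu : ∀ τ x : ℝ, u τ x =
      2 * Real.pi ^ 2 / (riemannZeta (2 * σ)).re ^ 4 * x * τ)
    (E : ℝ → ℝ → ℝ)
    (hE : ∀ τ x : ℝ, E τ x =
      Iσ (u τ x) ^ 4 * F (u τ x) *
        (∑ s ∈ Finset.range 5,
          c s * I₂ (u τ x) ^ (4 - s) * Iσ (u τ x) ^ s)⁻¹) :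
    (∀ x y z n : ℕ, 0 < x → 0 < y → 0 < z → 3 ≤ n →
      ∃ L : ℝ,
        Tendsto (fun τ : ℝ =>
          E τ (((x:ℝ) ^ n + (y:ℝ) ^ n) / (z:ℝ) ^ n) / τ) atTop (nhds L) ∧
        (L = 1 ↔ x ^ n + y ^ n = z ^ n)) ∧
    ((∀ x y z n : ℕ, 0 < x → 0 < y → 0 < z → 3 ≤ n →
        x ^ n + y ^ n ≠ z ^ n) ↔
      (∀ x y z n : ℕ, 0 < x → 0 < y → 0 < z → 3 ≤ n →
        ¬ Tendsto (fun τ : ℝ =>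
          E τ (((x:ℝ) ^ n + (y:ℝ) ^ n) / (z:ℝ) ^ n) / τ) atTop (nhds 1))) := by
  set Z := (riemannZeta (2 * σ)).re
  have hZ : 0 < Z := by
    simpa using riemannZeta_re_pos_of_one_lt (x := 2 * σ) (by linarith)
  have hasymp := isEquivalent_div_sum_mul_pow_of_isBigO (a := a) (c := c) hZ (by linarith)
    (by rw [ha0]; positivity) (by rw [hc0]; exact one_ne_zero) hIngham hquot
  refine fermat_iff_of_tendsto_self (fun τ q => E τ q / τ) fun q hq => ?_
  have hu_top : Tendsto (fun τ => u τ q) atTop atTop := by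
    simpa only [hu, id] using tendsto_id.const_mul_atTop (by positivity : 0 < 2 * π ^ 2 / Z ^ 4 * q)
  have hE_equiv : (fun τ => E τ q) ~[atTop] fun τ => q * τ := by
    refine (hasymp.comp_tendsto hu_top).congr_left ?_ |>.congr_right ?_
    · filter_upwards [hu_top.eventually hIσpos] with τ hτ
      rw [hE, sum_mul_pow_mul_pow_eq_pow_mul_sum c 4 _ hτ.ne', mul_inv, Function.comp_apply]
      field_simp
    · refine Eventually.of_forall fun τ => ?_
      rw [Function.comp_apply, hu, ha0, hc0]
      field_simp
  refine (hE_equiv.div IsEquivalent.refl).tendsto_nhds_iff.mpr <| tendsto_const_nhds.congr' ?_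
  filter_upwards [eventually_ne_atTop 0] with τ hτ
  simp only [Pi.div_apply, mul_div_cancel_right₀ q hτ]

/-- Theorem 2 of the paper: the ζ-condition on Fermat rationals
is an equivalent of the Fermat--Wiles theorem. -/
theorem zeta_equivalent_of_fermat_wiles
    (ε σ : ℝ) (hε : 0 < ε) (hε' : ε < 1 / 8) (hσ : 1 / 2 + ε ≤ σ)
    (a : ℕ → ℝ) (ha0 : a 0 = 1 / (2 * Real.pi ^ 2))
    (F I₂ Iσ : ℝ → ℝ) (g : ℝ → ℝ)
    (hF : ∀ T : ℝ, F T = ∫ t in (0:ℝ)..T,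
      ‖riemannZeta (1 / 2 + t * Complex.I)‖ ^ 4)
    (hI₂ : ∀ T : ℝ, I₂ T = ∫ t in T..(g T),
      ‖riemannZeta (1 / 2 + t * Complex.I)‖ ^ 2)
    (hIσ : ∀ T : ℝ, Iσ T = ∫ t in T..(g T),
      ‖riemannZeta (σ + t * Complex.I)‖ ^ 2)
    (hIngham : (fun T : ℝ => F T -
        T * ∑ s ∈ Finset.range 5, a s * Real.log T ^ (4 - s))
      =O[atTop] fun T : ℝ => T ^ ((7:ℝ) / 8 + ε))
    (hg : ∀ᶠ T : ℝ in atTop, T < g T)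
    (hI₂pos : ∀ᶠ T : ℝ in atTop, 0 < I₂ T)
    (hIσpos : ∀ᶠ T : ℝ in atTop, 0 < Iσ T)
    (hquot : (fun T : ℝ =>
        I₂ T / Iσ T - Real.log T / (riemannZeta (2 * σ)).re)
      =O[atTop] fun _ : ℝ => (1:ℝ))
    (c : ℕ → ℝ) (hc0 : c 0 = 1)
    (hc : ∀ s : ℕ, 1 ≤ s → s ≤ 4 →
      c s = 2 * Real.pi ^ 2 * ((riemannZeta (2 * σ)).re) ^ (-(s:ℤ)) * a s)
    (u : ℝ → ℝ → ℝ)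
    (hu : ∀ τ x : ℝ, u τ x =
      2 * Real.pi ^ 2 / (riemannZeta (2 * σ)).re ^ 4 * x * τ)
    (E : ℝ → ℝ → ℝ)
    (hE : ∀ τ x : ℝ, E τ x =
      Iσ (u τ x) ^ 4 * F (u τ x) *
        (∑ s ∈ Finset.range 5,
          c s * I₂ (u τ x) ^ (4 - s) * Iσ (u τ x) ^ s)⁻¹) :
    (∀ x y z n : ℕ, 0 < x → 0 < y → 0 < z → 3 ≤ n →
      ∃ L : ℝ,
        Tendsto (fun τ : ℝ =>
          E τ (((x:ℝ) ^ n + (y:ℝ) ^ n) / (z:ℝ) ^ n) / τ) atTop (nhds L) ∧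
        (L = 1 ↔ x ^ n + y ^ n = z ^ n)) ∧
    ((∀ x y z n : ℕ, 0 < x → 0 < y → 0 < z → 3 ≤ n →
        x ^ n + y ^ n ≠ z ^ n) ↔
      (∀ x y z n : ℕ, 0 < x → 0 < y → 0 < z → 3 ≤ n →
        ¬ Tendsto (fun τ : ℝ =>
          E τ (((x:ℝ) ^ n + (y:ℝ) ^ n) / (z:ℝ) ^ n) / τ) atTop (nhds 1))) :=
  zeta_equivalent_of_fermat_wiles_general ε σ hε hε' hσ a ha0 F I₂ Iσ hIngham hIσpos hquot c hc0 u
    hu E hE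
end

section
/- Fix ε ∈ (0, 1/8) and σ ≥ 1/2 + ε, let c denote the Euler–Mascheroni constant, and assume: (i) a₀ = 1/(2π²) and a₁, …, a₄ are real numbers with ∫₀^T |ζ(1/2 + it)|⁴ dt = T·Σ_{s=0}^{4} a_s (ln T)^{4−s} + O(T^{7/8+ε}) as T → ∞; (ii) g : ℝ → ℝ satisfies g(T) > T for all large T, the integrals ∫_T^{g(T)} |ζ(1/2 + it)|² dt and ∫_T^{g(T)} |ζ(σ + it)|² dt are positive for all large T, and (∫_T^{g(T)} |ζ(1/2 + it)|² dt)/(∫_T^{g(T)} |ζ(σ + it)|² dt) = (1/ζ(2σ))·ln T + O(1) as T → ∞; (iii) for every fixed x > 0, ∫_{xτ/(1−c)}^{g(xτ/(1−c))} |ζ(1/2 + it)|² dt ~ x·τ as τ → ∞. Put c₀ = 1, c_s = 2π²·ζ(2σ)^{−s}·a_s for s = 1, 2, 3, 4, and for x > 0, τ > 0 set u = (2π²/ζ(2σ)⁴)·x·τ. Then for every fixed x > 0, as τ → ∞: ∫_{xτ/(1−c)}^{g(xτ/(1−c))} |ζ(1/2 + it)|² dt ~ (∫_u^{g(u)} |ζ(σ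 + it)|² dt)⁴ · (∫₀^u |ζ(1/2 + it)|⁴ dt) · (Σ_{s=0}^{4} c_s · (∫_u^{g(u)} |ζ(1/2 + it)|² dt)^{4−s} · (∫_u^{g(u)} |ζ(σ + it)|² dt)^s)^{−1}. -/
/-!
The Ingham–Heath-Brown formula gives `F U ~ a₀ U (log U)⁴` and the quotient formula gives
`ζ(2σ) I₂ U / Iσ U ~ log U`. Since `c_s = 2π² ζ(2σ)⁻ˢ a_s` also for `s = 0`, the cross-breed sum
`∑ c_s I₂^(4-s) Iσ^s` equals `2π² (Iσ / ζ(2σ))⁴ ∑ a_s (ζ(2σ) I₂ / Iσ)^(4-s)`, which is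
`~ 2π² (Iσ / ζ(2σ))⁴ a₀ (log U)⁴`. Hence `Iσ⁴ F / ∑ c_s I₂^(4-s) Iσ^s ~ ζ(2σ)⁴ U / (2π²) = x τ`,
which is also the behaviour of the numerator by the first ζ-functional.
-/

open Filter Topology Real Asymptotics Finset

section

variable {α : Type*} {l : Filter α}

theorem tendsto_sum_mul_pow_sub_div_pow {y L : α → ℝ} (hL : Tendsto L l atTop)
    (hy : Tendsto (fun t => y t / L t) l (𝓝 1)) (a : ℕ → ℝ) (n : ℕ) :
    Tendsto (fun t => (∑ s ∈ range (n + 1), a s * y t ^ (n - s)) / L t ^ n) l (𝓝 (a 0)) := by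
  have hlim : Tendsto (fun t => ∑ s ∈ range (n + 1), a s * (y t / L t) ^ (n - s) * (L t)⁻¹ ^ s)
      l (𝓝 (∑ s ∈ range (n + 1), a s * 1 ^ (n - s) * 0 ^ s)) :=
    tendsto_finsetSum _ fun s _ =>
      (tendsto_const_nhds.mul (hy.pow _)).mul (hL.inv_tendsto_atTop.pow s)
  rw [sum_range_succ'] at hlim
  simp only [one_pow, mul_one, ne_eq, Nat.add_one_ne_zero, not_false_eq_true, zero_pow,
    mul_zero, sum_const_zero, pow_zero, zero_add] at hlim
  refine hlim.congr' ?_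
  filter_upwards [hL.eventually_gt_atTop 0] with t ht
  rw [sum_div]
  refine sum_congr rfl fun s hs => ?_
  obtain ⟨m, rfl⟩ := Nat.exists_eq_add_of_le (Nat.lt_succ_iff.mp (mem_range.mp hs))
  rw [Nat.add_sub_cancel_left, div_pow, inv_pow]
  field_simp
  ring

theorem tendsto_const_mul_div_of_sub_div_isBigO_one {f L : α → ℝ} {w : ℝ} (hw : w ≠ 0)
    (hL : Tendsto L l atTop) (h : (fun t => f t - L t / w) =O[l] fun _ => (1 : ℝ)) :
    Tendsto (fun t => w * f t / L t) l (𝓝 1) := by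
  have hsmall : Tendsto (fun t => (f t - L t / w) / L t) l (𝓝 0) :=
    (h.trans_isLittleO ((isLittleO_one_left_iff ℝ).mpr (tendsto_norm_atTop_atTop.comp hL)))
      |>.tendsto_div_nhds_zero
  have hlim := (hsmall.const_mul w).add_const 1
  rw [mul_zero, zero_add] at hlim
  refine hlim.congr' ?_
  filter_upwards [hL.eventually_gt_atTop 0] with t ht
  field_simp
  ring

end

theorem tendsto_rpow_div_mul_log_pow {θ : ℝ} (hθ : θ < 1) (n : ℕ) :
    Tendsto (fun T => T ^ θ / (T * log T ^ n)) atTop (𝓝 0) := by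
  have hlim := (tendsto_rpow_neg_atTop (sub_pos.mpr hθ)).mul
    (tendsto_log_atTop.inv_tendsto_atTop.pow n)
  rw [zero_mul] at hlim
  refine hlim.congr' ?_
  filter_upwards [eventually_gt_atTop 1] with T hT
  have hlog : log T ≠ 0 := (log_pos hT).ne'
  rw [neg_sub, rpow_sub_one (by positivity), Pi.inv_apply, inv_pow]
  field_simp

theorem tendsto_div_mul_log_pow_of_isBigO_rpow {F : ℝ → ℝ} {a : ℕ → ℝ} {n : ℕ} {θ : ℝ}
    (hθ : θ < 1)
    (h : (fun T => F T - T * ∑ s ∈ range (n + 1), a s * log T ^ (n - s)) =O[atTop]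
      fun T => T ^ θ) :
    Tendsto (fun T => F T / (T * log T ^ n)) atTop (𝓝 (a 0)) := by
  have hmain : Tendsto (fun T => (∑ s ∈ range (n + 1), a s * log T ^ (n - s)) / log T ^ n)
      atTop (𝓝 (a 0)) :=
    tendsto_sum_mul_pow_sub_div_pow tendsto_log_atTop
      (tendsto_const_nhds.congr' <| (tendsto_log_atTop.eventually_ne_atTop 0).mono
        fun T hT => (div_self hT).symm) a n
  have herr := (h.trans_isLittleO
    ((isLittleO_iff_tendsto' ?_).mpr (tendsto_rpow_div_mul_log_pow hθ n))).tendsto_div_nhds_zero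
  · have hlim := herr.add hmain
    rw [zero_add] at hlim
    refine hlim.congr' ?_
    filter_upwards [eventually_gt_atTop 1] with T hT
    have hlog : log T ≠ 0 := (log_pos hT).ne'
    have hT0 : T ≠ 0 := by positivity
    field_simp
    ring
  · filter_upwards [eventually_gt_atTop 1] with T hT h0
    have := log_pos hT
    exact absurd h0 (by positivity)

theorem sum_mul_pow_sub_mul_pow_eq_s9 {n : ℕ} {a c : ℕ → ℝ} {k w P S : ℝ} (hw : w ≠ 0)
    (hS : S ≠ 0) (hc : ∀ s ≤ n, c s = k * (w ^ s)⁻¹ * a s) :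
    ∑ s ∈ range (n + 1), c s * P ^ (n - s) * S ^ s =
      k * (S / w) ^ n * ∑ s ∈ range (n + 1), a s * (w * (P / S)) ^ (n - s) := by
  rw [mul_sum]
  refine sum_congr rfl fun s hs => ?_
  obtain ⟨m, rfl⟩ := Nat.exists_eq_add_of_le (Nat.lt_succ_iff.mp (mem_range.mp hs))
  rw [hc s (Nat.le_add_right s m), Nat.add_sub_cancel_left]
  simp only [pow_add, div_pow, mul_pow]
  field_simp

theorem tendsto_crossBreed_div_nhds_one {F P S : ℝ → ℝ} {a c : ℕ → ℝ} {n : ℕ} {θ k w : ℝ} (hθ : θ < 1)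
    (hk : k ≠ 0) (hw : w ≠ 0) (ha0 : a 0 ≠ 0)
    (hF : (fun T => F T - T * ∑ s ∈ range (n + 1), a s * log T ^ (n - s)) =O[atTop]
      fun T => T ^ θ)
    (hS : ∀ᶠ T in atTop, S T ≠ 0)
    (hquot : (fun T => P T / S T - log T / w) =O[atTop] fun _ => (1 : ℝ))
    (hc : ∀ s ≤ n, c s = k * (w ^ s)⁻¹ * a s) :
    Tendsto (fun T => S T ^ n * F T * (∑ s ∈ range (n + 1), c s * P T ^ (n - s) * S T ^ s)⁻¹ /
      (w ^ n / k * T)) atTop (𝓝 1) := by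
  have hQ := tendsto_sum_mul_pow_sub_div_pow tendsto_log_atTop
    (tendsto_const_mul_div_of_sub_div_isBigO_one hw tendsto_log_atTop hquot) a n
  have hlim := (tendsto_div_mul_log_pow_of_isBigO_rpow hθ hF).div hQ ha0
  rw [div_self ha0] at hlim
  refine hlim.congr' ?_
  filter_upwards [hS, hQ.eventually_ne ha0, eventually_gt_atTop 1] with T hST hQT hT
  have hlog : log T ≠ 0 := (log_pos hT).ne'
  have hT0 : T ≠ 0 := by positivity
  have hQT' := (div_ne_zero_iff.mp hQT).1
  rw [Pi.div_apply, sum_mul_pow_sub_mul_pow_eq_s9 hw hST hc, div_pow]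
  field_simp

theorem increment_decomposition_general
    (ε σ : ℝ) (hε : 0 < ε) (hε' : ε < 1 / 8) (hσ : 1 / 2 + ε ≤ σ)
    (a : ℕ → ℝ) (ha0 : a 0 = 1 / (2 * Real.pi ^ 2))
    (F I₂ Iσ : ℝ → ℝ)
    (hIngham : (fun T : ℝ => F T -
        T * ∑ s ∈ Finset.range 5, a s * Real.log T ^ (4 - s))
      =O[atTop] fun T : ℝ => T ^ ((7:ℝ) / 8 + ε))
    (hIσpos : ∀ᶠ T : ℝ in atTop, 0 < Iσ T)
    (hquot : (fun T : ℝ =>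
        I₂ T / Iσ T - Real.log T / (riemannZeta (2 * σ)).re)
      =O[atTop] fun _ : ℝ => (1:ℝ))
    (hfirst : ∀ x : ℝ, 0 < x →
      Tendsto (fun τ : ℝ =>
        I₂ (x * τ / (1 - Real.eulerMascheroniConstant)) / (x * τ))
        atTop (nhds 1))
    (c : ℕ → ℝ) (hc0 : c 0 = 1)
    (hc : ∀ s : ℕ, 1 ≤ s → s ≤ 4 →
      c s = 2 * Real.pi ^ 2 * ((riemannZeta (2 * σ)).re) ^ (-(s:ℤ)) * a s)
    (u : ℝ → ℝ → ℝ)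
    (hu : ∀ τ x : ℝ, u τ x =
      2 * Real.pi ^ 2 / (riemannZeta (2 * σ)).re ^ 4 * x * τ) :
    ∀ x : ℝ, 0 < x →
      Tendsto (fun τ : ℝ =>
        I₂ (x * τ / (1 - Real.eulerMascheroniConstant)) /
          (Iσ (u τ x) ^ 4 * F (u τ x) *
            (∑ s ∈ Finset.range 5,
              c s * I₂ (u τ x) ^ (4 - s) * Iσ (u τ x) ^ s)⁻¹))
        atTop (nhds 1) := by
  intro x hx
  set z := (riemannZeta (2 * σ)).re
  have hz : 0 < z := by
    simpa using riemannZeta_re_pos_of_one_lt (x := 2 * σ) (by linarith)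
  have hπ : 0 < 2 * Real.pi ^ 2 := by positivity
  have hc' : ∀ s ≤ 4, c s = 2 * Real.pi ^ 2 * (z ^ s)⁻¹ * a s := by
    intro s hs
    rcases Nat.eq_zero_or_pos s with rfl | hs0
    · rw [hc0, ha0]
      field_simp
    · rw [hc s hs0 hs, zpow_neg, zpow_natCast]
  have hcross := tendsto_crossBreed_div_nhds_one (n := 4) (by linarith) hπ.ne' hz.ne'
    (by rw [ha0]; positivity) hIngham (hIσpos.mono fun _ h => h.ne') hquot hc'
  have hU : Tendsto (fun τ => u τ x) atTop atTop := by
    simp only [hu]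
    exact tendsto_id.const_mul_atTop (by positivity)
  have hlim := (hfirst x hx).div (hcross.comp hU) one_ne_zero
  rw [div_one] at hlim
  refine hlim.congr' ?_
  filter_upwards [eventually_gt_atTop 0] with τ hτ
  have hscale : z ^ 4 / (2 * Real.pi ^ 2) * u τ x = x * τ := by
    rw [hu]
    field_simp
  simp only [Pi.div_apply, Function.comp_apply, hscale]
  exact div_div_div_cancel_right₀ (by positivity) _ _

/-- Theorem 3 of the paper: asymptotic decomposition of the
almost linear increments of the Hardy--Littlewood integral by means of the
cross-breed composition of zeta-integrals. -/
theorem increment_decomposition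
    (ε σ : ℝ) (hε : 0 < ε) (hε' : ε < 1 / 8) (hσ : 1 / 2 + ε ≤ σ)
    (a : ℕ → ℝ) (ha0 : a 0 = 1 / (2 * Real.pi ^ 2))
    (F I₂ Iσ : ℝ → ℝ) (g : ℝ → ℝ)
    (hF : ∀ T : ℝ, F T = ∫ t in (0:ℝ)..T,
      ‖riemannZeta (1 / 2 + t * Complex.I)‖ ^ 4)
    (hI₂ : ∀ T : ℝ, I₂ T = ∫ t in T..(g T),
      ‖riemannZeta (1 / 2 + t * Complex.I)‖ ^ 2)
    (hIσ : ∀ T : ℝ, Iσ T = ∫ t in T..(g T),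
      ‖riemannZeta (σ + t * Complex.I)‖ ^ 2)
    (hIngham : (fun T : ℝ => F T -
        T * ∑ s ∈ Finset.range 5, a s * Real.log T ^ (4 - s))
      =O[atTop] fun T : ℝ => T ^ ((7:ℝ) / 8 + ε))
    (hg : ∀ᶠ T : ℝ in atTop, T < g T)
    (hI₂pos : ∀ᶠ T : ℝ in atTop, 0 < I₂ T)
    (hIσpos : ∀ᶠ T : ℝ in atTop, 0 < Iσ T)
    (hquot : (fun T : ℝ =>
        I₂ T / Iσ T - Real.log T / (riemannZeta (2 * σ)).re)
      =O[atTop] fun _ : ℝ => (1:ℝ))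
    (hfirst : ∀ x : ℝ, 0 < x →
      Tendsto (fun τ : ℝ =>
        I₂ (x * τ / (1 - Real.eulerMascheroniConstant)) / (x * τ))
        atTop (nhds 1))
    (c : ℕ → ℝ) (hc0 : c 0 = 1)
    (hc : ∀ s : ℕ, 1 ≤ s → s ≤ 4 →
      c s = 2 * Real.pi ^ 2 * ((riemannZeta (2 * σ)).re) ^ (-(s:ℤ)) * a s)
    (u : ℝ → ℝ → ℝ)
    (hu : ∀ τ x : ℝ, u τ x =
      2 * Real.pi ^ 2 / (riemannZeta (2 * σ)).re ^ 4 * x * τ) :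
    ∀ x : ℝ, 0 < x →
      Tendsto (fun τ : ℝ =>
        I₂ (x * τ / (1 - Real.eulerMascheroniConstant)) /
          (Iσ (u τ x) ^ 4 * F (u τ x) *
            (∑ s ∈ Finset.range 5,
              c s * I₂ (u τ x) ^ (4 - s) * Iσ (u τ x) ^ s)⁻¹))
        atTop (nhds 1) :=
  increment_decomposition_general ε σ hε hε' hσ a ha0 F I₂ Iσ hIngham hIσpos hquot hfirst c hc0 hc u
    hu
end

section
/- Fix ε ∈ (0, 1/8), σ ≥ 1/2 + ε, and l ∈ ℕ, l ≥ 1; let c denote the Euler–Mascheroni constant. Assume: (i) a₀ = 1/(2π²) and a₁, …, a₄ are real numbers with ∫₀^T |ζ(1/2 + it)|⁴ dt = T·Σ_{s=0}^{4} a_s (ln T)^{4−s} + O(T^{7/8+ε}) as T → ∞; (ii) g : ℝ → ℝ satisfies g(T) > T for all large T, the integrals ∫_T^{g(T)} |ζ(1/2 + it)|² dt and ∫_T^{g(T)} |ζ(σ + it)|² dt are positive for all large T, and (∫_T^{g(T)} |ζ(1/2 + it)|² dt)/(∫_T^{g(T)} |ζ(σ + it)|² dt) = (1/ζ(2σ))·ln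 T + O(1) as T → ∞; (iii) for every fixed x > 0: ∫_{xτ/(1−c)}^{g(xτ/(1−c))} |ζ(1/2 + it)|² dt ~ xτ, Σ_{xτ/(1−c) < n ≤ g(xτ/(1−c))} d(n) ~ xτ, ln(Γ(g(xτ/(1−c)))/Γ(xτ/(1−c))) ~ xτ, ∫₁^{xτ/ζ(2σ)} |ζ(σ + it)|² dt ~ xτ, and, for some constant c̄(l) > 0, ∫₀^{xτ/c̄(l)} |S₁(t)|^{2l} dt ~ xτ as τ → ∞, where S₁(t) = (1/π)·∫₀^t arg ζ(1/2 + iu) du. Put c₀ = 1, c_s = 2π²·ζ(2σ)^{−s}·a_s for s = 1, 2, 3, 4, and u = (2π²/ζ(2σ)⁴)·x·τ. Then for every fixed x > 0 all of the following quantities are pairwise asymptotically equal as τ → ∞: ∫_{xτ/(1−c)}^{g(xτ/(1−c))} |ζ(1/2 + it)|² dt; the composition (∫_u^{g(u)} |ζ(σ + it)|² dt)⁴ · (∫₀^u |ζ(1/2 + it)|⁴ dt) · (Σ_{s=0}^{4} c_s · (∫_u^{g(u)} |ζ(1/2 + it)|² dt)^{4−s} · (∫_u^{g(u)} |ζ(σ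 + it)|² dt)^s)^{−1}; Σ_{xτ/(1−c) < n ≤ g(xτ/(1−c))} d(n); ln(Γ(g(xτ/(1−c)))/Γ(xτ/(1−c))); ∫₁^{xτ/ζ(2σ)} |ζ(σ + it)|² dt; and ∫₀^{xτ/c̄(l)} |S₁(t)|^{2l} dt. -/
/-!
Put `T = u(τ, x)`, `L = log T` and `z = ζ(2σ)`, which is positive because `2σ > 1`.
Moser's quotient formula gives `z · I₂/Iσ = L + O(1) ~ L`, so the sum in the composition equals
`(2π²/z⁴) · Iσ⁴ · ∑ aₛ (z I₂/Iσ)^(4-s) ~ (2π²/z⁴) · Iσ⁴ · a₀ L⁴`, while the Ingham–Heath-Brown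
formula gives `F(T) ~ a₀ T L⁴`, its error `T^(7/8+ε)` being `o(T)`. Everything but
`z⁴ T / (2π²) = x τ` cancels, so the composition is `~ x τ` like the other members of the chain.
-/

open Filter Real Complex Asymptotics

namespace Asymptotics

variable {α : Type*} {l : Filter α}

theorem isEquivalent_of_sub_isBigO_one {f g : α → ℝ} (hg : Tendsto g l atTop)
    (h : (f - g) =O[l] fun _ => (1 : ℝ)) : f ~[l] g :=
  h.trans_isLittleO ((isLittleO_one_left_iff ℝ).mpr (tendsto_norm_atTop_atTop.comp hg))

theorem isEquivalent_sum_mul_pow_sub {w : α → ℝ} (hw : Tendsto w l atTop) {a : ℕ → ℝ}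
    (ha : a 0 ≠ 0) (n : ℕ) :
    (fun t => ∑ s ∈ Finset.range (n + 1), a s * w t ^ (n - s)) ~[l]
      fun t => a 0 * w t ^ n := by
  have hlower : (fun t => ∑ s ∈ Finset.range n, a (s + 1) * w t ^ (n - (s + 1))) =o[l]
      fun t => a 0 * w t ^ n := by
    refine IsLittleO.fun_sum fun s hs => ?_
    have hlt : n - (s + 1) < n := Nat.sub_lt_self s.succ_pos (Finset.mem_range.mp hs)
    exact (((isLittleO_pow_pow_atTop_of_lt hlt).comp_tendsto hw).const_mul_left _).const_mul_right
      ha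
  refine (hlower.add_isEquivalent IsEquivalent.refl).congr_left ?_
  filter_upwards with t
  simp [Finset.sum_range_succ']

theorem isLittleO_rpow_id_atTop {β : ℝ} (hβ : β < 1) :
    (fun T : ℝ => T ^ β) =o[atTop] fun T => T := by
  have h := ((isLittleO_one_iff ℝ).mpr (tendsto_rpow_neg_atTop (sub_pos.mpr hβ))).mul_isBigO
    (isBigO_refl (fun T : ℝ => T) atTop)
  refine h.congr' ?_ (by simp)
  filter_upwards [eventually_gt_atTop 0] with T hT
  rw [neg_sub, rpow_sub_one hT.ne', div_mul_cancel₀ _ hT.ne']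

theorem isEquivalent_mul_log_pow_of_sub_isLittleO {F : ℝ → ℝ} {a : ℕ → ℝ} (ha : a 0 ≠ 0)
    {n : ℕ} (h : (fun T => F T - T * ∑ s ∈ Finset.range (n + 1), a s * Real.log T ^ (n - s))
      =o[atTop] fun T => T) :
    F ~[atTop] fun T => a 0 * T * Real.log T ^ n := by
  have hmain := (IsEquivalent.refl (u := fun T : ℝ => T)).mul
    (isEquivalent_sum_mul_pow_sub tendsto_log_atTop ha n)
  have hT : (fun T : ℝ => T) =O[atTop] fun T => T * (a 0 * Real.log T ^ n) := by
    refine ((isBigO_refl (fun T : ℝ => T) atTop).mul (IsBigO.of_bound |a 0|⁻¹ ?_)).congr_left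
      (fun T => mul_one T)
    filter_upwards [tendsto_log_atTop.eventually_ge_atTop 1] with T hT
    rw [norm_one, norm_mul, norm_pow, Real.norm_eq_abs, Real.norm_eq_abs, ← mul_assoc,
      inv_mul_cancel₀ (abs_pos.mpr ha).ne', one_mul, abs_of_pos (by linarith)]
    exact one_le_pow₀ hT
  refine ((hmain.add_isLittleO (h.trans_isBigO hT)).congr_left ?_).congr_right ?_
  all_goals filter_upwards with T
  all_goals simp only [Pi.add_apply, Pi.mul_apply]; ring

end Asymptotics

theorem sum_mul_pow_sub_mul_pow_eq_s10 {K : Type*} [Field K] {k z A B : K} (hz : z ≠ 0)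
    (hB : B ≠ 0) {a c : ℕ → K} {n : ℕ} (hc : ∀ s ≤ n, c s = k * z ^ (-(s : ℤ)) * a s) :
    ∑ s ∈ Finset.range (n + 1), c s * A ^ (n - s) * B ^ s =
      k / z ^ n * B ^ n * ∑ s ∈ Finset.range (n + 1), a s * (z * (A / B)) ^ (n - s) := by
  rw [Finset.mul_sum]
  refine Finset.sum_congr rfl fun s hs => ?_
  obtain ⟨m, rfl⟩ := Nat.exists_eq_add_of_le (Nat.lt_succ_iff.mp (Finset.mem_range.mp hs))
  rw [hc s (Nat.le_add_right s m), Nat.add_sub_cancel_left, zpow_neg, zpow_natCast, mul_pow,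
    div_pow]
  field_simp
  ring

theorem isEquivalent_pow_mul_mul_sum_inv {F A B : ℝ → ℝ} {a c : ℕ → ℝ} {k z : ℝ} {n : ℕ}
    (hz : z ≠ 0) (ha : a 0 ≠ 0) (hc : ∀ s ≤ n, c s = k * z ^ (-(s : ℤ)) * a s)
    (hF : (fun T => F T - T * ∑ s ∈ Finset.range (n + 1), a s * Real.log T ^ (n - s))
      =o[atTop] fun T => T)
    (hB : ∀ᶠ T in atTop, B T ≠ 0)
    (hAB : (fun T => A T / B T - Real.log T / z) =O[atTop] fun _ => (1 : ℝ)) :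
    (fun T => B T ^ n * F T * (∑ s ∈ Finset.range (n + 1), c s * A T ^ (n - s) * B T ^ s)⁻¹)
      ~[atTop] fun T => z ^ n / k * T := by
  have hw : (fun T => z * (A T / B T)) ~[atTop] Real.log :=
    isEquivalent_of_sub_isBigO_one tendsto_log_atTop <| (hAB.const_mul_left z).congr_left
      fun T => by field_simp; rfl
  have hP := (isEquivalent_sum_mul_pow_sub (hw.symm.tendsto_atTop tendsto_log_atTop) ha n).trans
    ((IsEquivalent.refl (u := fun _ => a 0)).mul (hw.pow n))
  have hq := ((IsEquivalent.refl (u := fun _ => z ^ n / k)).mul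
    (isEquivalent_mul_log_pow_of_sub_isLittleO ha hF)).div hP
  refine (hq.congr_left ?_).congr_right ?_
  · filter_upwards [hB] with T hBT
    simp only [Pi.mul_apply, Pi.div_apply]
    rw [sum_mul_pow_sub_mul_pow_eq_s10 hz hBT hc, mul_inv, mul_inv, inv_div]
    field_simp
  · filter_upwards [tendsto_log_atTop.eventually_gt_atTop 0] with T hT
    simp only [Pi.mul_apply, Pi.div_apply, Pi.pow_apply]
    field_simp

theorem chain_of_equivalences_general
    (ε σ : ℝ) (hε : 0 < ε) (hε' : ε < 1 / 8) (hσ : 1 / 2 + ε ≤ σ)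
    (a : ℕ → ℝ) (ha0 : a 0 = 1 / (2 * Real.pi ^ 2))
    (F I₂ Iσ : ℝ → ℝ)
    -- (i) the Ingham--Heath-Brown formula
    (hIngham : (fun T : ℝ => F T -
        T * ∑ s ∈ Finset.range 5, a s * Real.log T ^ (4 - s))
      =O[atTop] fun T : ℝ => T ^ ((7:ℝ) / 8 + ε))
    -- (ii) Moser's quotient formula
    (hIσpos : ∀ᶠ T : ℝ in atTop, 0 < Iσ T)
    (hquot : (fun T : ℝ =>
        I₂ T / Iσ T - Real.log T / (riemannZeta (2 * σ)).re)
      =O[atTop] fun _ : ℝ => (1:ℝ))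
    -- the coefficients and the substitution
    (c : ℕ → ℝ) (hc0 : c 0 = 1)
    (hc : ∀ s : ℕ, 1 ≤ s → s ≤ 4 →
      c s = 2 * Real.pi ^ 2 * ((riemannZeta (2 * σ)).re) ^ (-(s:ℤ)) * a s)
    (u : ℝ → ℝ → ℝ)
    (hu : ∀ τ x : ℝ, u τ x =
      2 * Real.pi ^ 2 / (riemannZeta (2 * σ)).re ^ 4 * x * τ)
    -- the six members of the chain
    (Q : Fin 6 → ℝ → ℝ → ℝ)
    (hQ1 : ∀ x τ : ℝ, Q 1 x τ =
      Iσ (u τ x) ^ 4 * F (u τ x) *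
        (∑ s ∈ Finset.range 5,
          c s * I₂ (u τ x) ^ (4 - s) * Iσ (u τ x) ^ s)⁻¹)
    -- (iii) Moser's earlier ζ-functionals, taken as hypotheses
    (hiii : ∀ i : Fin 6, i ≠ 1 → ∀ x : ℝ, 0 < x →
      Tendsto (fun τ : ℝ => Q i x τ / (x * τ)) atTop (nhds 1)) :
    -- conclusion: the members of the chain are pairwise asymptotically equal
    ∀ x : ℝ, 0 < x → ∀ i j : Fin 6,
      Tendsto (fun τ : ℝ => Q i x τ / Q j x τ) atTop (nhds 1) := by
  set z := (riemannZeta (2 * σ)).re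
  have hz : 0 < z := by
    have h := riemannZeta_re_pos_of_one_lt (x := 2 * σ) (by linarith)
    push_cast at h
    exact h
  have hc' : ∀ s ≤ 4, c s = 2 * π ^ 2 * z ^ (-(s : ℤ)) * a s := by
    intro s hs
    rcases Nat.eq_zero_or_pos s with rfl | hs0
    · rw [hc0, ha0, Nat.cast_zero, neg_zero, zpow_zero]
      field_simp
    · exact hc s hs0 hs
  have hΦ := isEquivalent_pow_mul_mul_sum_inv hz.ne' (by rw [ha0]; positivity)
    hc' (hIngham.trans_isLittleO (isLittleO_rpow_id_atTop (by linarith)))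
    (hIσpos.mono fun _ h => h.ne') hquot
  intro x hx
  have hxτ : Tendsto (fun τ => x * τ) atTop atTop := tendsto_id.const_mul_atTop hx
  have hequiv : ∀ k, Q k x ~[atTop] fun τ => x * τ := by
    intro k
    by_cases hk : k = 1
    · subst hk
      have hu_lim : Tendsto (fun τ => u τ x) atTop atTop := by
        simp only [hu, mul_assoc]
        exact hxτ.const_mul_atTop (by positivity)
      refine ((hΦ.comp_tendsto hu_lim).congr_left ?_).congr_right ?_
      all_goals filter_upwards with τ
      · exact (hQ1 x τ).symm
      · simp only [Function.comp_apply, hu]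
        field_simp
    · exact isEquivalent_of_tendsto_one (hiii k hk x hx)
  intro i j
  have hpos := (hequiv j).eventually_pos (hxτ.eventually_gt_atTop 0)
  exact (isEquivalent_iff_tendsto_one (hpos.mono fun _ h => h.ne')).mp
    ((hequiv i).trans (hequiv j).symm)

/-- Theorem 4 of the paper: a finite chain of asymptotic
equivalences for the almost linear increments of the Hardy--Littlewood
integral.  The six members of the chain are collected in `Q : Fin 6 → _`. -/
theorem chain_of_equivalences
    (ε σ : ℝ) (hε : 0 < ε) (hε' : ε < 1 / 8) (hσ : 1 / 2 + ε ≤ σ)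
    (l : ℕ) (hl : 1 ≤ l)
    (a : ℕ → ℝ) (ha0 : a 0 = 1 / (2 * Real.pi ^ 2))
    (F I₂ Iσ : ℝ → ℝ) (g : ℝ → ℝ)
    (hF : ∀ T : ℝ, F T = ∫ t in (0:ℝ)..T,
      ‖riemannZeta (1 / 2 + t * Complex.I)‖ ^ 4)
    (hI₂ : ∀ T : ℝ, I₂ T = ∫ t in T..(g T),
      ‖riemannZeta (1 / 2 + t * Complex.I)‖ ^ 2)
    (hIσ : ∀ T : ℝ, Iσ T = ∫ t in T..(g T),
      ‖riemannZeta (σ + t * Complex.I)‖ ^ 2)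
    -- (i) the Ingham--Heath-Brown formula
    (hIngham : (fun T : ℝ => F T -
        T * ∑ s ∈ Finset.range 5, a s * Real.log T ^ (4 - s))
      =O[atTop] fun T : ℝ => T ^ ((7:ℝ) / 8 + ε))
    -- (ii) Moser's quotient formula
    (hg : ∀ᶠ T : ℝ in atTop, T < g T)
    (hI₂pos : ∀ᶠ T : ℝ in atTop, 0 < I₂ T)
    (hIσpos : ∀ᶠ T : ℝ in atTop, 0 < Iσ T)
    (hquot : (fun T : ℝ =>
        I₂ T / Iσ T - Real.log T / (riemannZeta (2 * σ)).re)
      =O[atTop] fun _ : ℝ => (1:ℝ))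
    -- the coefficients and the substitution
    (c : ℕ → ℝ) (hc0 : c 0 = 1)
    (hc : ∀ s : ℕ, 1 ≤ s → s ≤ 4 →
      c s = 2 * Real.pi ^ 2 * ((riemannZeta (2 * σ)).re) ^ (-(s:ℤ)) * a s)
    (u : ℝ → ℝ → ℝ)
    (hu : ∀ τ x : ℝ, u τ x =
      2 * Real.pi ^ 2 / (riemannZeta (2 * σ)).re ^ 4 * x * τ)
    -- S₁ and the constant c̄(l)
    (S₁ : ℝ → ℝ)
    (hS₁ : ∀ t : ℝ, S₁ t = 1 / Real.pi *
      ∫ v in (0:ℝ)..t, Complex.arg (riemannZeta (1 / 2 + v * Complex.I)))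
    (cbar : ℝ) (hcbar : 0 < cbar)
    -- the six members of the chain
    (Q : Fin 6 → ℝ → ℝ → ℝ)
    (hQ0 : ∀ x τ : ℝ, Q 0 x τ =
      I₂ (x * τ / (1 - Real.eulerMascheroniConstant)))
    (hQ1 : ∀ x τ : ℝ, Q 1 x τ =
      Iσ (u τ x) ^ 4 * F (u τ x) *
        (∑ s ∈ Finset.range 5,
          c s * I₂ (u τ x) ^ (4 - s) * Iσ (u τ x) ^ s)⁻¹)
    (hQ2 : ∀ x τ : ℝ, Q 2 x τ =
      ∑ n ∈ Finset.Ioc ⌊x * τ / (1 - Real.eulerMascheroniConstant)⌋₊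
          ⌊g (x * τ / (1 - Real.eulerMascheroniConstant))⌋₊,
        (n.divisors.card : ℝ))
    (hQ3 : ∀ x τ : ℝ, Q 3 x τ =
      Real.log (Real.Gamma (g (x * τ / (1 - Real.eulerMascheroniConstant))) /
        Real.Gamma (x * τ / (1 - Real.eulerMascheroniConstant))))
    (hQ4 : ∀ x τ : ℝ, Q 4 x τ =
      ∫ t in (1:ℝ)..(x * τ / (riemannZeta (2 * σ)).re),
        ‖riemannZeta (σ + t * Complex.I)‖ ^ 2)
    (hQ5 : ∀ x τ : ℝ, Q 5 x τ =
      ∫ t in (0:ℝ)..(x * τ / cbar), |S₁ t| ^ (2 * l))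
    -- (iii) Moser's earlier ζ-functionals, taken as hypotheses
    (hiii : ∀ i : Fin 6, i ≠ 1 → ∀ x : ℝ, 0 < x →
      Tendsto (fun τ : ℝ => Q i x τ / (x * τ)) atTop (nhds 1)) :
    -- conclusion: the members of the chain are pairwise asymptotically equal
    ∀ x : ℝ, 0 < x → ∀ i j : Fin 6,
      Tendsto (fun τ : ℝ => Q i x τ / Q j x τ) atTop (nhds 1) :=
  chain_of_equivalences_general ε σ hε hε' hσ a ha0 F I₂ Iσ hIngham hIσpos hquot c hc0 hc u hu Q hQ1
    hiii
end
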